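/- arXiv:1311.2341 — 3 statements merged into one kernel-verified Lean document; each statement's English description precedes it below -/
import Mathlib

section
/- Let z : [0,∞) → ℝ be differentiable with z(0) = 0, and suppose there exists a function L : [0,∞) → ℝ with L(0) = 0, L differentiable at 0, such that z(x+y) - z(x) = z(y) + L(y/x) for all x > 0, y ≥ 0. Then z is linear: z(x) = C·x for some constant C. -/
open Set Filter

theorem stmt_4 (z L : ℝ → ℝ)
    (hz_diff : DifferentiableOn ℝ z (Set.Ici 0)) (hz0 : z 0 = 0)
    (hL0 : L 0 = 0) (hL_diff : DifferentiableWithinAt ℝ L (Set.Ici 0) 0)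
    (heq : ∀ x > 0, ∀ y ≥ 0, z (x + y) - z x = z y + L (y / x)) :
    ∃ C : ℝ, ∀ x ≥ 0, z x = C * x := by
  set A := derivWithin z (Set.Ici 0) 0 with hAdef
  set B := derivWithin L (Set.Ici 0) 0 with hBdef
  have hA : HasDerivWithinAt z A (Set.Ici 0) 0 :=
    (hz_diff 0 Set.self_mem_Ici).hasDerivWithinAt
  have hB : HasDerivWithinAt L B (Set.Ici 0) 0 := hL_diff.hasDerivWithinAt
  have huniq : UniqueDiffWithinAt ℝ (Set.Ici (0:ℝ)) 0 :=
    uniqueDiffOn_Ici (0:ℝ) 0 Set.self_mem_Ici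
  -- step 1: deriv of z at x > 0
  have key : ∀ x : ℝ, 0 < x → HasDerivAt z (A + B * x⁻¹) x := by
    intro x hx
    have hmem : Set.Ici (0:ℝ) ∈ nhds x :=
      Filter.mem_of_superset (Ioi_mem_nhds hx) Set.Ioi_subset_Ici_self
    have hzx : DifferentiableAt ℝ z x :=
      (hz_diff x (le_of_lt hx)).differentiableAt hmem
    have hd : HasDerivAt z (deriv z x) x := hzx.hasDerivAt
    -- g1
    have h1 : HasDerivAt (fun y => z (x + y)) (deriv z x) 0 := by
      have hi : HasDerivAt (fun y : ℝ => x + y) 1 0 := (hasDerivAt_id 0).const_add x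
      have := HasDerivAt.comp 0 (by simpa using hd : HasDerivAt z (deriv z x) (x + 0)) hi
      simpa [Function.comp_def] using this
    have g1 : HasDerivWithinAt (fun y => z (x + y) - z x) (deriv z x) (Set.Ici 0) 0 :=
      (h1.sub_const (z x)).hasDerivWithinAt
    -- g2
    have hinner : HasDerivWithinAt (fun y : ℝ => y / x) x⁻¹ (Set.Ici 0) 0 := by
      simpa using (hasDerivWithinAt_id (0:ℝ) (Set.Ici 0)).div_const x
    have hmaps : Set.MapsTo (fun y : ℝ => y / x) (Set.Ici 0) (Set.Ici 0) := by
      intro y hy; exact div_nonneg hy (le_of_lt hx)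
    have h2 : HasDerivWithinAt (fun y => L (y / x)) (B * x⁻¹) (Set.Ici 0) 0 := by
      have := HasDerivWithinAt.comp 0 (by simpa using hB : HasDerivWithinAt L B (Set.Ici 0) ((0:ℝ)/x)) hinner hmaps
      simpa [Function.comp_def] using this
    have g2 : HasDerivWithinAt (fun y => z y + L (y / x)) (A + B * x⁻¹) (Set.Ici 0) 0 := hA.add h2
    have g2' : HasDerivWithinAt (fun y => z (x + y) - z x) (A + B * x⁻¹) (Set.Ici 0) 0 := by
      apply g2.congr
      · intro y hy; exact heq x hx y hy
      · exact heq x hx 0 le_rfl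
    have : deriv z x = A + B * x⁻¹ := by
      rw [← g1.derivWithin huniq, g2'.derivWithin huniq]
    exact this ▸ hd
  -- step 2: f := z - (A x + B log x) is constant on Ioi 0
  set f : ℝ → ℝ := fun t => z t - (A * t + B * Real.log t) with hfdef
  have hf' : ∀ t : ℝ, 0 < t → HasDerivAt f 0 t := by
    intro t ht
    have h1 : HasDerivAt (fun s : ℝ => A * s + B * Real.log s) (A + B * t⁻¹) t :=
      ((hasDerivAt_id t).const_mul A).add ((Real.hasDerivAt_log (ne_of_gt ht)).const_mul B) |>.congr_deriv (by ring)
    simpa [hfdef, Pi.sub_def] using (key t ht).sub h1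
  have hconst : ∀ a b : ℝ, 0 < a → a ≤ b → f b = f a := by
    intro a b ha hab
    have hcont : ContinuousOn f (Set.Icc a b) := fun t ht =>
      ((hf' t (lt_of_lt_of_le ha ht.1)).continuousAt).continuousWithinAt
    have hderiv : ∀ t ∈ Set.Ico a b, HasDerivWithinAt f 0 (Set.Ici t) t := fun t ht =>
      (hf' t (lt_of_lt_of_le ha ht.1)).hasDerivWithinAt
    exact constant_of_has_deriv_right_zero hcont hderiv b (Set.right_mem_Icc.2 hab)
  have hfc : ∀ t : ℝ, 0 < t → f t = f 1 := by
    intro t ht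
    rcases le_total t 1 with h | h
    · exact (hconst t 1 ht h).symm
    · exact hconst 1 t one_pos h
  set c := f 1 with hcdef
  -- step 3: limit as t → 0+
  have hzt : Filter.Tendsto z (nhdsWithin 0 (Set.Ioi 0)) (nhds 0) := by
    have := (hz_diff.continuousOn 0 Set.self_mem_Ici)
    have h := this.tendsto
    rw [hz0] at h
    exact h.mono_left (nhdsWithin_mono 0 Set.Ioi_subset_Ici_self)
  have hAt : Filter.Tendsto (fun t : ℝ => A * t) (nhdsWithin 0 (Set.Ioi 0)) (nhds 0) := by
    have : Filter.Tendsto (fun t : ℝ => A * t) (nhds 0) (nhds (A * 0)) :=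
      (continuous_const.mul continuous_id).tendsto 0
    simpa using this.mono_left nhdsWithin_le_nhds
  have hBlog : Filter.Tendsto (fun t : ℝ => B * Real.log t + c) (nhdsWithin 0 (Set.Ioi 0)) (nhds 0) := by
    have heqf : ∀ t ∈ Set.Ioi (0:ℝ), z t - A * t = B * Real.log t + c := by
      intro t ht
      have := hfc t ht
      simp only [hfdef] at this
      linarith [this]
    have h1 : Filter.Tendsto (fun t : ℝ => z t - A * t) (nhdsWithin 0 (Set.Ioi 0)) (nhds 0) := by
      simpa using hzt.sub hAt
    exact h1.congr' (eventually_nhdsWithin_of_forall heqf)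
  have hB0 : B = 0 := by
    by_contra hBne
    have hlog : Filter.Tendsto Real.log (nhdsWithin 0 (Set.Ioi 0)) Filter.atBot :=
      Real.tendsto_log_nhdsGT_zero
    rcases lt_or_gt_of_ne hBne with hneg | hpos
    · have : Filter.Tendsto (fun t : ℝ => B * Real.log t + c) (nhdsWithin 0 (Set.Ioi 0)) Filter.atTop := by
        exact (hlog.const_mul_atBot_of_neg hneg).atTop_add tendsto_const_nhds
      exact (not_tendsto_nhds_of_tendsto_atTop this 0) hBlog
    · have : Filter.Tendsto (fun t : ℝ => B * Real.log t + c) (nhdsWithin 0 (Set.Ioi 0)) Filter.atBot := by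
        exact (hlog.const_mul_atBot hpos).atBot_add tendsto_const_nhds
      exact (not_tendsto_nhds_of_tendsto_atBot this 0) hBlog
  have hc0 : c = 0 := by
    have : Filter.Tendsto (fun _ : ℝ => c) (nhdsWithin 0 (Set.Ioi 0)) (nhds 0) := by
      simpa [hB0] using hBlog
    exact tendsto_nhds_unique tendsto_const_nhds this
  refine ⟨A, fun x hx => ?_⟩
  rcases eq_or_lt_of_le hx with h0 | h0
  · simp [← h0, hz0]
  · have := hfc x h0
    simp only [hfdef, hB0, hc0, zero_mul] at this
    linarith [this]
end

section
/- Let f, g : (0,∞) → (0,∞) and M, L : (0,∞) → (0,∞) satisfy f(x)·g(y) = M(√(x²+y²))·L(y/x) for all x, y > 0, with f/g continuous. Then there exists γ ∈ ℝ and a constant K > 0 such that f(x) = K · x^γ · g(x) for all x > 0. -/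
theorem stmt_11 (f g M L : ℝ → ℝ)
    (hf : ∀ x > 0, f x > 0) (hg : ∀ x > 0, g x > 0)
    (hM : ∀ x > 0, M x > 0) (hL : ∀ x > 0, L x > 0)
    (heq : ∀ x > 0, ∀ y > 0, f x * g y = M (Real.sqrt (x^2 + y^2)) * L (y / x))
    (hcont : ContinuousOn (fun x => f x / g x) (Set.Ioi 0)) :
    ∃ γ K : ℝ, K > 0 ∧ ∀ x > 0, f x = K * x ^ γ * g x := by
  set p : ℝ → ℝ := fun x => f x / g x with hp
  have hppos : ∀ x > 0, p x > 0 := fun x hx => div_pos (hf x hx) (hg x hx)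
  -- key relation: p x * L (x/y) = p y * L (y/x)
  have key : ∀ x > 0, ∀ y > 0, p x * L (x / y) = p y * L (y / x) := by
    intro x hx y hy
    have h1 := heq x hx y hy
    have h2 := heq y hy x hx
    have hs : Real.sqrt (y ^ 2 + x ^ 2) = Real.sqrt (x ^ 2 + y ^ 2) := by rw [add_comm]
    rw [hs] at h2
    have hgx := (hg x hx).ne'
    have hgy := (hg y hy).ne'
    have hmain : f x * g y * L (x / y) = f y * g x * L (y / x) := by
      linear_combination L (x / y) * h1 - L (y / x) * h2
    simp only [hp]
    field_simp
    linarith [hmain]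
  -- multiplicative relation
  have mult : ∀ x > 0, ∀ y > 0, p x * p 1 = p y * p (x / y) := by
    intro x hx y hy
    have hxy : x / y > 0 := div_pos hx hy
    have A := key x hx y hy
    have B := key (x / y) hxy 1 one_pos
    rw [div_one, one_div_div] at B
    have hL' := (hL (x / y) hxy).ne'
    have hcancel : (p x * p 1 - p y * p (x / y)) * L (x / y) = 0 := by
      linear_combination p 1 * A - p y * B
    rcases mul_eq_zero.1 hcancel with h | h
    · linarith
    · exact absurd h hL'
  have hp1 : p 1 > 0 := hppos 1 one_pos
  have hQmul : ∀ a > 0, ∀ b > 0, p (a * b) * p 1 = p a * p b := by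
    intro a ha b hb
    have := mult (a * b) (mul_pos ha hb) a ha
    rwa [mul_div_cancel_left₀ _ ha.ne'] at this
  -- define h
  set h : ℝ → ℝ := fun t => Real.log (p (Real.exp t) / p 1) with hh
  have hadd : ∀ s t, h (s + t) = h s + h t := by
    intro s t
    have hes := Real.exp_pos s
    have het := Real.exp_pos t
    have hqs := hppos _ hes
    have hqt := hppos _ het
    have : p (Real.exp (s + t)) = p (Real.exp s) * p (Real.exp t) / p 1 := by
      have := hQmul _ hes _ het
      rw [← Real.exp_add] at this
      field_simp
      linarith
    simp only [hh, this]
    rw [← Real.log_mul, div_div]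
    · congr 1
      ring
    · positivity
    · positivity
  have hcont_h : Continuous h := by
    have hpe : Continuous fun t => p (Real.exp t) :=
      hcont.comp_continuous Real.continuous_exp fun t => Set.mem_Ioi.2 (Real.exp_pos t)
    have : Continuous fun t => p (Real.exp t) / p 1 := hpe.div_const _
    exact this.log fun t => (div_pos (hppos _ (Real.exp_pos t)) hp1).ne'
  have hlin : ∀ t : ℝ, h t = t * h 1 := by
    let φ : ℝ →+ ℝ := AddMonoidHom.mk' h hadd
    intro t
    have h2 := (φ.toRealLinearMap hcont_h).map_smul t 1
    simpa [φ, AddMonoidHom.coe_toRealLinearMap, smul_eq_mul] using (show h (t * 1) = t * h 1 from h2)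
  refine ⟨h 1, p 1, hp1, fun x hx => ?_⟩
  have hlog : h (Real.log x) = Real.log x * h 1 := hlin _
  have hpx := hppos x hx
  have : Real.log (p x / p 1) = Real.log x * h 1 := by
    rw [← hlog]; simp only [hh, Real.exp_log hx]
  have hrpow : p x / p 1 = x ^ (h 1) := by
    rw [Real.rpow_def_of_pos hx, ← this, Real.exp_log (div_pos hpx hp1)]
  have hgx := (hg x hx).ne'
  have : p x = p 1 * x ^ (h 1) := by
    field_simp at hrpow
    linarith
  calc f x = p x * g x := by simp only [hp]; field_simp
  _ = p 1 * x ^ (h 1) * g x := by rw [this]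
end

section
/- Let v : (0,∞) → (0,∞) satisfy 0 < inf_{x∈(0,1)} v(x) ≤ sup_{x∈(0,1)} v(x) < ∞, and suppose v(x)·v(y) = M(√(x²+y²))·L(y/x) for all x, y > 0 for some measurable M, L : (0,∞) → (0,∞), with v measurable. If additionally v is monotone on some interval, then v(x) = C₆ exp(-C₇ x²) for constants C₆ > 0, C₇ ∈ ℝ. -/
open MeasureTheory

private lemma nat_mul_g {g : ℝ → ℝ} (hadd : ∀ x > 0, ∀ y > 0, g (x + y) = g x + g y) :
    ∀ (n : ℕ), 1 ≤ n → ∀ (x : ℝ), 0 < x → g (n * x) = n * g x := by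
  intro n
  induction n with
  | zero => intro h; omega
  | succ n ih =>
    intro _ x hx
    rcases Nat.eq_zero_or_pos n with h0 | h1
    · subst h0; simp
    · have hn0 : (0:ℝ) < (n:ℝ) := by exact_mod_cast h1
      have h2 : ((n:ℝ) + 1) * x = (n:ℝ) * x + x := by ring
      have h3 := hadd ((n:ℝ) * x) (mul_pos hn0 hx) x hx
      push_cast
      rw [h2, h3, ih h1 x hx]
      ring

private lemma cauchy_bounded {g : ℝ → ℝ} (hadd : ∀ x > 0, ∀ y > 0, g (x + y) = g x + g y)
    {η B : ℝ} (hη : 0 < η) (hB : ∀ x : ℝ, 0 < x → x < η → |g x| ≤ B) :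
    ∃ A : ℝ, ∀ x > 0, g x = A * x := by
  set u := η / 2 with hu
  have hu0 : 0 < u := by positivity
  set A := g u / u with hA
  refine ⟨A, ?_⟩
  intro x hx
  by_contra hne
  have hd0 : 0 < |g x - A * x| := by
    apply abs_pos.mpr
    intro h
    exact hne (by linarith [sub_eq_zero.mp h])
  set d := |g x - A * x| with hd
  obtain ⟨n, hn⟩ := exists_nat_gt (max ((B + |A| * η) / d) (η / x))
  have hn1 : (B + |A| * η) / d < n := lt_of_le_of_lt (le_max_left _ _) hn
  have hn2 : η / x < n := lt_of_le_of_lt (le_max_right _ _) hn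
  have hnx : η < n * x := by
    rw [div_lt_iff₀ hx] at hn2; linarith
  have hn0 : (0:ℝ) < n := lt_trans (by positivity) hn2
  have hnn : 1 ≤ n := by exact_mod_cast Nat.one_le_iff_ne_zero.mpr (by
    intro h; rw [h] at hn0; simp at hn0)
  set a := (n : ℝ) * x / u with ha
  have ha2 : 2 < a := by
    rw [ha, lt_div_iff₀ hu0, hu]; linarith
  set k := Nat.ceil a with hk
  have hk1 : a ≤ (k : ℝ) := Nat.le_ceil a
  have hk2 : (k : ℝ) < a + 1 := Nat.ceil_lt_add_one (by linarith)
  have hk3 : 3 ≤ k := by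
    have h2k : (2:ℝ) < (k:ℝ) := lt_of_lt_of_le ha2 hk1
    have : 2 < k := by exact_mod_cast h2k
    omega
  set m := k - 1 with hm
  have hm1 : 1 ≤ m := by omega
  have hmr : (m : ℝ) = (k : ℝ) - 1 := by
    rw [hm]; push_cast [Nat.cast_sub (by omega : 1 ≤ k)]; ring
  set r := (n : ℝ) * x - (m:ℝ) * u with hr
  have hr0 : 0 < r := by
    have hma : (m:ℝ) < a := by rw [hmr]; linarith
    have : (m:ℝ) * u < (n:ℝ) * x := by
      rw [ha] at hma
      calc (m:ℝ) * u < ((n:ℝ) * x / u) * u := by exact mul_lt_mul_of_pos_right hma hu0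
        _ = (n:ℝ) * x := by field_simp
    rw [hr]; linarith
  have hru : r ≤ u := by
    have hma : a - 1 ≤ (m:ℝ) := by rw [hmr]; linarith
    have : (n:ℝ) * x - u ≤ (m:ℝ) * u := by
      have := mul_le_mul_of_nonneg_right hma hu0.le
      have he : (a - 1) * u = (n:ℝ) * x - u := by rw [ha]; field_simp
      linarith [he ▸ this]
    rw [hr]; linarith
  have hm0 : (0:ℝ) < (m:ℝ) := by exact_mod_cast hm1
  have e1 : g ((n:ℝ) * x) = (n:ℝ) * g x := nat_mul_g hadd n hnn x hx
  have e2 : g ((n:ℝ) * x) = g r + (m:ℝ) * g u := by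
    have hsplit : (n:ℝ) * x = r + (m:ℝ) * u := by rw [hr]; ring
    rw [hsplit, hadd r hr0 ((m:ℝ)*u) (mul_pos hm0 hu0), nat_mul_g hadd m hm1 u hu0]
  have hgu : g u = A * u := by rw [hA]; field_simp
  have hgr : |g r| ≤ B := hB r hr0 (lt_of_le_of_lt hru (by rw [hu]; linarith))
  have h2 : (n:ℝ) * (g x - A * x) = g r - A * r := by
    have : (n:ℝ) * g x = g r + (m:ℝ) * (A * u) := by rw [← hgu, ← e2, e1]
    rw [hr]; nlinarith [this]
  have hest : (n:ℝ) * d ≤ B + |A| * η := by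
    have habs : |r| ≤ η := by rw [abs_of_pos hr0]; rw [hu] at hru; linarith
    calc (n:ℝ) * d = |(n:ℝ) * (g x - A * x)| := by
          rw [abs_mul, abs_of_pos hn0, hd]
      _ = |g r - A * r| := by rw [h2]
      _ ≤ |g r| + |A * r| := abs_sub _ _
      _ ≤ B + |A| * η := by
          rw [abs_mul]
          exact add_le_add hgr (mul_le_mul_of_nonneg_left habs (abs_nonneg A))
  have hfin : B + |A| * η < (n:ℝ) * d := by
    rw [div_lt_iff₀ hd0] at hn1; linarith
  linarith


set_option maxHeartbeats 1000000 in
theorem stmt_19 (v M L : ℝ → ℝ)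
    (hv_pos : ∀ x > 0, v x > 0) (hM_pos : ∀ x > 0, M x > 0) (hL_pos : ∀ x > 0, L x > 0)
    (hbound : ∃ c C : ℝ, 0 < c ∧ (∀ x ∈ Set.Ioo (0:ℝ) 1, c ≤ v x ∧ v x ≤ C))
    (hv_meas : Measurable v) (hM_meas : Measurable M) (hL_meas : Measurable L)
    (heq : ∀ x > 0, ∀ y > 0, v x * v y = M (Real.sqrt (x^2 + y^2)) * L (y / x))
    (hmono : ∃ a b : ℝ, 0 < a ∧ a < b ∧
      (MonotoneOn v (Set.Ioo a b) ∨ AntitoneOn v (Set.Ioo a b))) :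
    ∃ C₆ C₇ : ℝ, C₆ > 0 ∧ ∀ x > 0, v x = C₆ * Real.exp (-C₇ * x^2) := by
  obtain ⟨c, C, hc, hbd⟩ := hbound
  have hC : (0:ℝ) < C := by
    have h := hbd (1/2) ⟨by norm_num, by norm_num⟩
    linarith [h.1, h.2]
  set F : ℝ → ℝ := fun u => Real.log (v (Real.sqrt u)) with hFdef
  -- base identity
  have base : ∀ u > 0, ∀ w > 0, F u + F w
      = Real.log (M (Real.sqrt (u + w))) + Real.log (L (Real.sqrt (w / u))) := by
    intro u hu w hw
    have hx : 0 < Real.sqrt u := Real.sqrt_pos.mpr hu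
    have hy : 0 < Real.sqrt w := Real.sqrt_pos.mpr hw
    have h := heq _ hx _ hy
    have h1 : Real.sqrt u ^ 2 + Real.sqrt w ^ 2 = u + w := by
      rw [Real.sq_sqrt hu.le, Real.sq_sqrt hw.le]
    have h2 : Real.sqrt w / Real.sqrt u = Real.sqrt (w / u) := (Real.sqrt_div hw.le u).symm
    rw [h1, h2] at h
    have hM0 : 0 < M (Real.sqrt (u + w)) := hM_pos _ (Real.sqrt_pos.mpr (by linarith))
    have hL0 : 0 < L (Real.sqrt (w / u)) := hL_pos _ (Real.sqrt_pos.mpr (by positivity))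
    show Real.log (v (Real.sqrt u)) + Real.log (v (Real.sqrt w)) = _
    rw [← Real.log_mul (ne_of_gt (hv_pos _ hx)) (ne_of_gt (hv_pos _ hy)), h,
      Real.log_mul (ne_of_gt hM0) (ne_of_gt hL0)]
  have key : ∀ u > 0, ∀ w > 0, F u + F w - 2 * F ((u + w) / 2)
      = Real.log (L (Real.sqrt (w / u))) - Real.log (L 1) := by
    intro u hu w hw
    have hmid : 0 < (u + w) / 2 := by linarith
    have h1 := base u hu w hw
    have h2 := base _ hmid _ hmid
    rw [show (u + w) / 2 + (u + w) / 2 = u + w by ring,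
      div_self (ne_of_gt hmid), Real.sqrt_one] at h2
    linarith
  -- boundedness of F on (0,1)
  set B0 : ℝ := max |Real.log c| |Real.log C| with hB0
  have Fb : ∀ u : ℝ, 0 < u → u < 1 → |F u| ≤ B0 := by
    intro u hu hu1
    have hs0 : 0 < Real.sqrt u := Real.sqrt_pos.mpr hu
    have hs1 : Real.sqrt u < 1 := by
      have := Real.sqrt_lt_sqrt hu.le hu1
      rwa [Real.sqrt_one] at this
    obtain ⟨hl, hr⟩ := hbd _ ⟨hs0, hs1⟩
    have hv0 := hv_pos _ hs0
    have h1 : Real.log c ≤ F u := Real.log_le_log hc hl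
    have h2 : F u ≤ Real.log C := Real.log_le_log hv0 hr
    rw [abs_le]
    constructor
    · have : -|Real.log c| ≤ Real.log c := neg_abs_le _
      have hb : |Real.log c| ≤ B0 := le_max_left _ _
      linarith
    · have : Real.log C ≤ |Real.log C| := le_abs_self _
      have hb : |Real.log C| ≤ B0 := le_max_right _ _
      linarith
  -- main step: for each t > 0, F (t u) - F u is affine in u
  have main : ∀ t : ℝ, 0 < t → ∃ a b0 : ℝ, ∀ u > 0, F (t * u) = F u + a * u + b0 := by
    intro t ht
    set ψ : ℝ → ℝ := fun u => F (t * u) - F u with hψ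
    have jensen : ∀ u > 0, ∀ w > 0, ψ u + ψ w = 2 * ψ ((u + w) / 2) := by
      intro u hu w hw
      have h1 := key u hu w hw
      have h2 := key (t * u) (mul_pos ht hu) (t * w) (mul_pos ht hw)
      rw [show (t * u + t * w) / 2 = t * ((u + w) / 2) by ring,
        mul_div_mul_left w u (ne_of_gt ht)] at h2
      simp only [hψ]
      linarith
    have sumdep : ∀ p > 0, ∀ q > 0, ∀ p' > 0, ∀ q' > 0, p + q = p' + q' →
        ψ p + ψ q = ψ p' + ψ q' := by
      intro p hp q hq p' hp' q' hq' hsum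
      rw [jensen p hp q hq, jensen p' hp' q' hq', hsum]
    set c₀ : ℝ := min 1 (1/t) / 4 with hc₀
    have hmin : 0 < min 1 (1/t) := lt_min one_pos (by positivity)
    have hc₀0 : 0 < c₀ := by rw [hc₀]; linarith
    set g : ℝ → ℝ := fun x => ψ (x + c₀) - ψ c₀ with hg
    have gadd : ∀ x > 0, ∀ y > 0, g (x + y) = g x + g y := by
      intro x hx y hy
      have h := sumdep (x + y + c₀) (by linarith) c₀ hc₀0
        (x + c₀) (by linarith) (y + c₀) (by linarith) (by ring)
      simp only [hg]
      linarith
    have ψb : ∀ x : ℝ, 0 < x → x ≤ 3 * c₀ → |ψ x| ≤ 2 * B0 := by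
      intro x hx hx3
      have hlt : x < min 1 (1/t) := by rw [hc₀] at hx3; linarith
      have hx1 : x < 1 := lt_of_lt_of_le hlt (min_le_left _ _)
      have hxt : t * x < 1 := by
        have h := lt_of_lt_of_le hlt (min_le_right _ _)
        rw [lt_div_iff₀ ht] at h
        linarith [h]
      have h1 := Fb (t*x) (mul_pos ht hx) hxt
      have h2 := Fb x hx hx1
      simp only [hψ]
      calc |F (t*x) - F x| ≤ |F (t*x)| + |F x| := abs_sub _ _
        _ ≤ 2 * B0 := by linarith
    have gb : ∀ x : ℝ, 0 < x → x < 2 * c₀ → |g x| ≤ 4 * B0 := by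
      intro x hx hx2
      have h1 := ψb (x + c₀) (by linarith) (by linarith)
      have h2 := ψb c₀ hc₀0 (by linarith)
      simp only [hg]
      calc |ψ (x+c₀) - ψ c₀| ≤ |ψ (x+c₀)| + |ψ c₀| := abs_sub _ _
        _ ≤ 4 * B0 := by linarith
    obtain ⟨a, ha⟩ := cauchy_bounded gadd (by linarith : (0:ℝ) < 2*c₀) gb
    have ψlin : ∀ u : ℝ, c₀ < u → ψ u = a * u + (ψ c₀ - a * c₀) := by
      intro u hu
      have hx : 0 < u - c₀ := by linarith
      have h := ha (u - c₀) hx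
      simp only [hg] at h
      rw [show u - c₀ + c₀ = u by ring] at h
      linarith
    refine ⟨a, ψ c₀ - a * c₀, ?_⟩
    intro u hu
    have hJ := jensen u hu (u + 4*c₀) (by linarith)
    rw [show (u + (u + 4*c₀))/2 = u + 2*c₀ by ring] at hJ
    have l1 := ψlin (u + 4*c₀) (by linarith)
    have l2 := ψlin (u + 2*c₀) (by linarith)
    have hfin : ψ u = a * u + (ψ c₀ - a * c₀) := by linarith
    have hre : ψ u = F (t * u) - F u := rfl
    linarith
  obtain ⟨A, b, hAb⟩ : ∃ A b : ℝ → ℝ, ∀ t > 0, ∀ u > 0, F (t * u) = F u + A t * u + b t := by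
    choose A b h using main
    refine ⟨fun t => if ht : 0 < t then A t ht else 0,
           fun t => if ht : 0 < t then b t ht else 0, fun t ht u hu => ?_⟩
    simp only [dif_pos ht]
    exact h t ht u hu
  -- cocycle identities
  have coc : ∀ t > 0, ∀ s > 0, A (t*s) = A s + A t * s ∧ b (t*s) = b s + b t := by
    intro t ht s hs
    have hts : 0 < t*s := mul_pos ht hs
    have q1 := hAb (t*s) hts 1 one_pos
    have q2 := hAb s hs 1 one_pos
    have q3 := hAb t ht s hs
    rw [mul_one, mul_one] at q1
    rw [mul_one, mul_one] at q2
    have q1' := hAb (t*s) hts 2 two_pos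
    have q2' := hAb s hs 2 two_pos
    have q3' := hAb t ht (s*2) (by linarith)
    rw [show t * (s*2) = (t*s) * 2 by ring] at q3'
    have e : A t * (s*2) = 2 * (A t * s) := by ring
    rw [e] at q3'
    constructor <;> nlinarith [q1, q2, q3, q1', q2', q3']
  have hb1 : b 1 = 0 := by
    have h := (coc 1 one_pos 1 one_pos).2
    rw [mul_one] at h
    linarith
  have hAform : ∀ s > 0, A s = A 2 * (s - 1) := by
    intro s hs
    have h1 := (coc 2 two_pos s hs).1
    have h2 := (coc s hs 2 two_pos).1
    rw [show s*2 = 2*s by ring] at h2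
    nlinarith [h1, h2]
  have hbF : ∀ t > 0, b t = F t - F 1 - A t := by
    intro t ht
    have h := hAb t ht 1 one_pos
    rw [mul_one, mul_one] at h
    linarith
  set B1 : ℝ := B0 + |F 1| + |A 2| with hB1
  have bb : ∀ t : ℝ, 0 < t → t < 1 → |b t| ≤ B1 := by
    intro t ht ht1
    rw [hbF t ht, hAform t ht]
    have h1 := Fb t ht ht1
    have hA : |A 2 * (t-1)| ≤ |A 2| := by
      rw [abs_mul]
      have : |t - 1| ≤ 1 := by rw [abs_le]; constructor <;> linarith
      nlinarith [abs_nonneg (A 2)]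
    calc |F t - F 1 - A 2 * (t-1)| ≤ |F t| + |F 1| + |A 2 * (t-1)| := by
          have := abs_sub (F t - F 1) (A 2 * (t-1))
          have := abs_sub (F t) (F 1)
          linarith [abs_sub (F t - F 1) (A 2 * (t-1)), abs_sub (F t) (F 1)]
      _ ≤ B1 := by rw [hB1]; linarith
  set β : ℝ → ℝ := fun x => b (Real.exp x) with hβ
  have βadd : ∀ x y : ℝ, β (x + y) = β x + β y := by
    intro x y
    have h := (coc (Real.exp x) (Real.exp_pos x) (Real.exp y) (Real.exp_pos y)).2
    simp only [hβ]
    rw [Real.exp_add]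
    linarith
  have β0 : β 0 = 0 := by simp only [hβ, Real.exp_zero]; exact hb1
  have βneg : ∀ x : ℝ, β (-x) = -β x := by
    intro x
    have h := βadd x (-x)
    rw [add_neg_cancel, β0] at h
    linarith
  have βb : ∀ x : ℝ, 0 < x → x < 1 → |β x| ≤ B1 := by
    intro x hx _
    have h1 : Real.exp (-x) < 1 := Real.exp_lt_one_iff.mpr (by linarith)
    have h2 := bb (Real.exp (-x)) (Real.exp_pos _) h1
    have h3 : β x = -β (-x) := by rw [βneg x]; ring
    rw [h3, abs_neg]
    exact h2
  obtain ⟨Bc, hBc⟩ := cauchy_bounded (fun x _ y _ => βadd x y) one_pos βb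
  have βlin : ∀ x : ℝ, β x = Bc * x := by
    intro x
    rcases lt_trichotomy x 0 with h|h|h
    · have h1 := hBc (-x) (by linarith)
      have h2 := βneg x
      have h3 : β (-x) = -β x := by rw [← h2]  -- βneg gives this directly
      rw [h1] at h3
      linarith [h3]
    · rw [h, β0]; ring
    · exact hBc x h
  have blog : ∀ t > 0, b t = Bc * Real.log t := by
    intro t ht
    have h : b (Real.exp (Real.log t)) = Bc * Real.log t := βlin (Real.log t)
    rwa [Real.exp_log ht] at h
  have Fform : ∀ x > 0, F x = F 1 + A 2 * (x - 1) + Bc * Real.log x := by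
    intro x hx
    have h := hAb x hx 1 one_pos
    rw [mul_one, mul_one] at h
    rw [hAform x hx, blog x hx] at h
    linarith
  set K : ℝ := Real.exp (F 1 - A 2) with hK
  have hK0 : 0 < K := Real.exp_pos _
  have vform : ∀ x > 0, v x = K * Real.exp (A 2 * x^2) * Real.exp (2 * Bc * Real.log x) := by
    intro x hx
    have hx2 : (0:ℝ) < x^2 := by positivity
    have h := Fform (x^2) hx2
    have hFx : F (x^2) = Real.log (v x) := by
      simp only [hFdef]
      rw [Real.sqrt_sq hx.le]
    have hlog : Real.log (x^2) = 2 * Real.log x := by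
      rw [show x^2 = x*x by ring, Real.log_mul (ne_of_gt hx) (ne_of_gt hx)]; ring
    rw [hFx, hlog] at h
    have : v x = Real.exp (Real.log (v x)) := (Real.exp_log (hv_pos x hx)).symm
    rw [this, h, hK, ← Real.exp_add, ← Real.exp_add]
    ring_nf
  -- Bc = 0
  have hBc0 : Bc = 0 := by
    rcases lt_trichotomy Bc 0 with hB|hB|hB
    · exfalso
      set ε' : ℝ := C * Real.exp |A 2| / K with hε'
      have hε'0 : 0 < ε' := by positivity
      set x : ℝ := min (1/2) (Real.exp (Real.log ε' / (2*Bc) - 1)) with hxdef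
      have hx0 : 0 < x := lt_min (by norm_num) (Real.exp_pos _)
      have hx1 : x < 1 := lt_of_le_of_lt (min_le_left _ _) (by norm_num)
      have hlogx : Real.log x ≤ Real.log ε' / (2*Bc) - 1 := by
        have h := Real.log_le_log hx0 (min_le_right (1/2) (Real.exp (Real.log ε' / (2*Bc) - 1)))
        rwa [Real.log_exp] at h
      have h2B : 2 * Bc < 0 := by linarith
      have he : 2*Bc * (Real.log ε' / (2*Bc) - 1) = Real.log ε' - 2*Bc := by
        field_simp [hB.ne]
      have hmul : Real.log ε' - 2*Bc ≤ 2 * Bc * Real.log x := by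
        have h := mul_le_mul_of_nonpos_left hlogx h2B.le
        linarith [he ▸ h]
      have hgt : Real.log ε' < 2*Bc*Real.log x := by linarith
      have hexp : ε' < Real.exp (2*Bc*Real.log x) := by
        calc ε' = Real.exp (Real.log ε') := (Real.exp_log hε'0).symm
          _ < _ := Real.exp_lt_exp.mpr hgt
      have hA2 : Real.exp (-|A 2|) ≤ Real.exp (A 2 * x^2) := by
        apply Real.exp_le_exp.mpr
        have h1 : x^2 ≤ 1 := by nlinarith
        rcases le_or_gt 0 (A 2) with h|h
        · nlinarith [abs_nonneg (A 2)]
        · rw [abs_of_neg h]; nlinarith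
      have hvx := vform x hx0
      have hCv : v x ≤ C := (hbd x ⟨hx0, hx1⟩).2
      have step1 : K * Real.exp (-|A 2|) * ε' < v x := by
        rw [hvx]
        have hh1 : K * Real.exp (-|A 2|) * ε' < K * Real.exp (-|A 2|) * Real.exp (2*Bc*Real.log x) :=
          mul_lt_mul_of_pos_left hexp (by positivity)
        have hh2 : K * Real.exp (-|A 2|) * Real.exp (2*Bc*Real.log x)
            ≤ K * Real.exp (A 2 * x^2) * Real.exp (2*Bc*Real.log x) := by
          apply mul_le_mul_of_nonneg_right _ (Real.exp_pos _).le
          exact mul_le_mul_of_nonneg_left hA2 hK0.le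
        linarith
      have heqC : K * Real.exp (-|A 2|) * ε' = C := by
        rw [hε', Real.exp_neg]
        field_simp
      linarith
    · exact hB
    · exfalso
      set ε : ℝ := c / (K * Real.exp |A 2|) with hε
      have hε0 : 0 < ε := by positivity
      set x : ℝ := min (1/2) (Real.exp (Real.log ε / (2*Bc) - 1)) with hxdef
      have hx0 : 0 < x := lt_min (by norm_num) (Real.exp_pos _)
      have hx1 : x < 1 := lt_of_le_of_lt (min_le_left _ _) (by norm_num)
      have hlogx : Real.log x ≤ Real.log ε / (2*Bc) - 1 := by
        have h := Real.log_le_log hx0 (min_le_right (1/2) (Real.exp (Real.log ε / (2*Bc) - 1)))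
        rwa [Real.log_exp] at h
      have h2B : 0 < 2 * Bc := by linarith
      have he : 2*Bc * (Real.log ε / (2*Bc) - 1) = Real.log ε - 2*Bc := by
        field_simp [hB.ne']
      have hmul : 2 * Bc * Real.log x ≤ Real.log ε - 2*Bc := by
        have h := mul_le_mul_of_nonneg_left hlogx h2B.le
        linarith [he ▸ h]
      have hlt : 2*Bc*Real.log x < Real.log ε := by linarith
      have hexp : Real.exp (2*Bc*Real.log x) < ε := by
        calc Real.exp (2*Bc*Real.log x) < Real.exp (Real.log ε) := Real.exp_lt_exp.mpr hlt
          _ = ε := Real.exp_log hε0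
      have hA2 : Real.exp (A 2 * x^2) ≤ Real.exp |A 2| := by
        apply Real.exp_le_exp.mpr
        have h1 : x^2 ≤ 1 := by nlinarith
        have h2 : A 2 ≤ |A 2| := le_abs_self _
        nlinarith [abs_nonneg (A 2), sq_nonneg x]
      have hvx := vform x hx0
      have hcv : c ≤ v x := (hbd x ⟨hx0, hx1⟩).1
      have step1 : v x < K * Real.exp |A 2| * ε := by
        rw [hvx]
        have hh2 : K * Real.exp (A 2 * x^2) * Real.exp (2*Bc*Real.log x)
            ≤ K * Real.exp |A 2| * Real.exp (2*Bc*Real.log x) := by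
          apply mul_le_mul_of_nonneg_right _ (Real.exp_pos _).le
          exact mul_le_mul_of_nonneg_left hA2 hK0.le
        have hh1 : K * Real.exp |A 2| * Real.exp (2*Bc*Real.log x) < K * Real.exp |A 2| * ε :=
          mul_lt_mul_of_pos_left hexp (by positivity)
        linarith
      have heqc : K * Real.exp |A 2| * ε = c := by
        rw [hε]
        field_simp
      linarith
  refine ⟨K, -(A 2), hK0, fun x hx => ?_⟩
  rw [vform x hx, hBc0]
  norm_num
end
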